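/- arXiv:2102.04698 — 2 statements merged into one kernel-verified Lean document; each statement's English description precedes it below -/
import Mathlib

section
/- Let Σ = (A,𝔤,{X¹,…,Xⁿ}) be a regular embedded noncommutative manifold with hermitian basis {∂_a}_{a=1}^m of 𝔤, e_a = ê_i·∂_a(X^i), h⁰ the standard hermitian form on Aⁿ, h_{ab} = h⁰(e_a,e_b), and h^{ab} ∈ A with (h^{ab})* = h^{ba} and Σ_{a,b} e_a·h^{ab}·h_{bc} = e_c. Define p : Aⁿ → Aⁿ by p(U) = Σ_{a,b} e_a·h^{ab}·h⁰(e_b,U). Then p² = p, the image of p equals TΣ (the submodule generated by e₁,…,e_m), and p is orthogonal with respect to h⁰, i.e. h⁰(p(U),V) = h⁰(U,p(V)) for all U,V ∈ Aⁿ. -/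
/-- A (ℂ-linear) derivation of the unital ∗-algebra `A`. -/
def IsCDeriv {A : Type*} [Ring A] [Algebra ℂ A] (δ : A → A) : Prop :=
  (∀ x y, δ (x + y) = δ x + δ y) ∧ (∀ (c : ℂ) (x : A), δ (c • x) = c • δ x) ∧
  (∀ x y, δ (x * y) = δ x * y + x * δ y)

/-- The conjugate derivation `δ*(f) = (δ(f*))*`. -/
def starDeriv {A : Type*} [Ring A] [StarRing A] (δ : A → A) : A → A :=
  fun f => star (δ (star f))

/-- A Lie pair `(A,𝔤)`: `𝔤` is a (complex) Lie algebra of derivations of `A`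
which is closed under `δ ↦ δ*`. -/
def IsLiePair {A : Type*} [Ring A] [StarRing A] [Algebra ℂ A]
    (G : Set (A → A)) : Prop :=
  (∀ δ ∈ G, IsCDeriv δ) ∧
  (∀ δ₁ ∈ G, ∀ δ₂ ∈ G, δ₁ + δ₂ ∈ G) ∧
  (∀ (c : ℂ), ∀ δ ∈ G, c • δ ∈ G) ∧
  (∀ δ₁ ∈ G, ∀ δ₂ ∈ G, (fun x => δ₁ (δ₂ x) - δ₂ (δ₁ x)) ∈ G) ∧
  (∀ δ ∈ G, starDeriv δ ∈ G)

/-- The standard hermitian form `h⁰(U,V) = Σ_i (U^i)*·V^i` on `Aⁿ`. -/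
def hform {A : Type*} [Ring A] [StarRing A] {n : ℕ} (U V : Fin n → A) : A :=
  ∑ i, star (U i) * V i

/-- The generators `e_a = ê_i·∂_a(X^i)` of the module of vector fields `TΣ` of an
embedded noncommutative manifold. -/
def eT {A : Type*} {n m : ℕ} (pd : Fin m → (A → A)) (X : Fin n → A)
    (a : Fin m) : Fin n → A :=
  fun i => pd a (X i)

/-- The projection `p(U) = Σ_{a,b} e_a·h^{ab}·h⁰(e_b,U)` onto `TΣ`. -/
def tProj {A : Type*} [Ring A] [StarRing A] {n m : ℕ}
    (pd : Fin m → (A → A)) (X : Fin n → A) (hu : Fin m → Fin m → A)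
    (U : Fin n → A) : Fin n → A :=
  fun i => ∑ a, ∑ b, eT pd X a i * (hu a b * hform (eT pd X b) U)

/-- For a regular embedded noncommutative manifold
`Σ = (A,𝔤,{X¹,…,Xⁿ})`, the map `p(U) = Σ_{a,b} e_a·h^{ab}·h⁰(e_b,U)` is an
idempotent whose image equals `TΣ` (the right submodule generated by `e₁,…,e_m`,
i.e. the set of right combinations `Σ_a e_a·c_a`), and which is orthogonal with
respect to `h⁰`. -/
theorem embedded_manifold_projection
    {A : Type*} [Ring A] [StarRing A] [Algebra ℂ A] [StarModule ℂ A]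
    (n m : ℕ) (G : Set (A → A)) (hG : IsLiePair G)
    (pd : Fin m → (A → A))
    (hmem : ∀ a, pd a ∈ G)
    (hsa : ∀ a, starDeriv (pd a) = pd a)
    (hspan : ∀ δ ∈ G, ∃ c : Fin m → ℂ, δ = ∑ a, c a • pd a)
    (hindep : ∀ c : Fin m → ℂ, (∑ a, c a • pd a) = 0 → ∀ a, c a = 0)
    (X : Fin n → A) (hX : ∀ i, star (X i) = X i)
    (hu : Fin m → Fin m → A)
    (hustar : ∀ a b, star (hu a b) = hu b a)
    (hureg : ∀ c i, (∑ a, ∑ b, eT pd X a i * (hu a b * hform (eT pd X b) (eT pd X c)))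
      = eT pd X c i) :
    (∀ U, tProj pd X hu (tProj pd X hu U) = tProj pd X hu U) ∧
    (∀ U, ∃ cf : Fin m → A, tProj pd X hu U = fun i => ∑ a, eT pd X a i * cf a) ∧
    (∀ cf : Fin m → A, tProj pd X hu (fun i => ∑ a, eT pd X a i * cf a) =
      fun i => ∑ a, eT pd X a i * cf a) ∧

    (∀ U V, hform (tProj pd X hu U) V = hform U (tProj pd X hu V)) := by
  classical
  have herm : ∀ a i, star (eT pd X a i) = eT pd X a i := by
    intro a i
    have := congrFun (hsa a) (X i)
    simpa [starDeriv, hX i, eT] using this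
  have hstar : ∀ (W V : Fin n → A), star (hform W V) = hform V W := by
    intro W V
    simp [hform, star_sum]
  have hlin : ∀ (W : Fin n → A) (f : Fin m → A),
      hform W (fun i => ∑ c, eT pd X c i * f c) = ∑ c, hform W (eT pd X c) * f c := by
    intro W f
    simp only [hform, Finset.mul_sum, Finset.sum_mul, mul_assoc]
    exact Finset.sum_comm
  have rot : ∀ (g : Fin m → Fin m → Fin m → A),
      (∑ a, ∑ b, ∑ c, g a b c) = ∑ c, ∑ a, ∑ b, g a b c := by
    intro g
    rw [show (∑ a, ∑ b, ∑ c, g a b c) = ∑ a, ∑ c, ∑ b, g a b c from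
      Finset.sum_congr rfl fun a _ => Finset.sum_comm]
    exact Finset.sum_comm
  have key : ∀ (f : Fin m → A) (i : Fin n),
      (∑ a, ∑ b, eT pd X a i * (hu a b * ∑ c, hform (eT pd X b) (eT pd X c) * f c))
        = ∑ c, eT pd X c i * f c := by
    intro f i
    have step : ∀ a b, eT pd X a i * (hu a b * ∑ c, hform (eT pd X b) (eT pd X c) * f c)
        = ∑ c, eT pd X a i * (hu a b * hform (eT pd X b) (eT pd X c)) * f c := by
      intro a b
      simp [Finset.mul_sum, mul_assoc]
    simp only [step]
    rw [rot]
    refine Finset.sum_congr rfl fun c _ => ?_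
    rw [← hureg c i, Finset.sum_mul]
    exact Finset.sum_congr rfl fun a _ => (Finset.sum_mul ..).symm
  have hproj : ∀ (U : Fin n → A), tProj pd X hu U
      = fun i => ∑ c, eT pd X c i * (∑ d, hu c d * hform (eT pd X d) U) := by
    intro U
    funext i
    simp [tProj, Finset.mul_sum]
  refine ⟨?_, ?_, ?_, ?_⟩
  · intro U
    funext i
    rw [hproj U]
    show (∑ a, ∑ b, eT pd X a i * (hu a b * hform (eT pd X b)
        (fun j => ∑ c, eT pd X c j * (∑ d, hu c d * hform (eT pd X d) U))))
      = ∑ c, eT pd X c i * (∑ d, hu c d * hform (eT pd X d) U)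
    simp only [hlin]
    exact key _ i
  · intro U
    exact ⟨fun a => ∑ d, hu a d * hform (eT pd X d) U, hproj U⟩
  · intro cf
    funext i
    show (∑ a, ∑ b, eT pd X a i * (hu a b *
        hform (eT pd X b) (fun j => ∑ c, eT pd X c j * cf c))) = _
    simp only [hlin]
    exact key cf i
  · intro U V
    have lhs : hform (tProj pd X hu U) V
        = ∑ a, ∑ b, hform U (eT pd X b) * hu b a * hform (eT pd X a) V := by
      simp only [hform, tProj, star_sum, star_mul, Finset.sum_mul, Finset.mul_sum, herm,
        hustar, hstar]
      rw [Finset.sum_comm]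
      refine Finset.sum_congr rfl fun a _ => ?_
      rw [Finset.sum_comm]
      refine Finset.sum_congr rfl fun b _ => ?_
      simp only [hform, star_sum, star_mul, star_star, Finset.sum_mul, Finset.mul_sum,
        mul_assoc]
    have rhs : hform U (tProj pd X hu V)
        = ∑ a, ∑ b, hform U (eT pd X a) * hu a b * hform (eT pd X b) V := by
      simp only [hform, tProj, Finset.mul_sum]
      rw [Finset.sum_comm]
      refine Finset.sum_congr rfl fun a _ => ?_
      rw [Finset.sum_comm]
      refine Finset.sum_congr rfl fun b _ => ?_
      simp only [hform, star_sum, Finset.sum_mul, Finset.mul_sum, mul_assoc]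
      exact Finset.sum_comm
    rw [lhs, rhs, Finset.sum_comm]
end

section
/- Let Σ = (A,𝔤,{X¹,…,Xⁿ}) be a regular embedded noncommutative manifold with hermitian basis {∂_a}_{a=1}^m of 𝔤, and let γ_{a,ij} ∈ A (a = 1,…,m; i,j = 1,…,n) satisfy γ_{a,ij}* = γ_{a,ji}. Let p(U) = Σ_{a,b} e_a·h^{ab}·h⁰(e_b,U) be the orthogonal projection onto TΣ and let ∇⁰ be the connection on Aⁿ given by ∇⁰_{∂_a}(ê_i U^i) = ê_i·∂_a(U^i) + i·ê_i·γ_{a,ij}·U^j. Then ∇ = p∘∇⁰ is a hermitian connection on (TΣ, h), and it satisfies ∇_{∂_a} e_b = Σ_{c,p} e_c·h^{cp}·( h⁰(e_p, ∂_a e_b) + i·γ_{a,pb} ), where ∂_a e_b = ê_i·∂_a∂_b(X^i) and γ_{a,pb} = Σ_{i,j} (e_p^i)*·γ_{a,ij}·e_b^j. -/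
/-- The right action of `A` on the free right module `Aⁿ`. -/
def smulR {A : Type*} [Ring A] {n : ℕ} (U : Fin n → A) (a : A) : Fin n → A :=
  fun i => U i * a

/-- Membership in `TΣ`, the right submodule generated by `e₁,…,e_m`. -/
def InT {A : Type*} [Ring A] {n m : ℕ} (pd : Fin m → (A → A)) (X : Fin n → A)
    (U : Fin n → A) : Prop :=
  ∃ cf : Fin m → A, U = fun i => ∑ a, eT pd X a i * cf a

/-- The hermitian connection `∇⁰_{∂_a}(ê_iU^i) = ê_i·∂_a(U^i) + i·ê_i·γ_{a,ij}·U^j`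
on the free module `Aⁿ`. -/
def conn0 {A : Type*} [Ring A] [Algebra ℂ A] {n m : ℕ}
    (pd : Fin m → (A → A)) (γ : Fin m → Fin n → Fin n → A)
    (a : Fin m) (U : Fin n → A) : Fin n → A :=
  fun i => pd a (U i) + ∑ j, Complex.I • (γ a i j * U j)

/-- The projected connection `∇ = p∘∇⁰` on `TΣ`. -/
def connNabla {A : Type*} [Ring A] [StarRing A] [Algebra ℂ A] {n m : ℕ}
    (pd : Fin m → (A → A)) (X : Fin n → A) (hu : Fin m → Fin m → A)
    (γ : Fin m → Fin n → Fin n → A) (a : Fin m) (U : Fin n → A) : Fin n → A :=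
  tProj pd X hu (conn0 pd γ a U)

/-- The components `γ_{a,pb} = Σ_{i,j} (e_p^i)*·γ_{a,ij}·e_b^j`. -/
def gammaT {A : Type*} [Ring A] [StarRing A] {n m : ℕ}
    (pd : Fin m → (A → A)) (X : Fin n → A) (γ : Fin m → Fin n → Fin n → A)
    (a p b : Fin m) : A :=
  ∑ i, ∑ j, star (eT pd X p i) * (γ a i j * eT pd X b j)

private lemma sumswap3 {M : Type*} [AddCommMonoid M] {α β γ' : Type*}
    [Fintype α] [Fintype β] [Fintype γ'] (f : α → β → γ' → M) :
    ∑ a, ∑ b, ∑ c, f a b c = ∑ c, ∑ a, ∑ b, f a b c := by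
  calc ∑ a, ∑ b, ∑ c, f a b c = ∑ a, ∑ c, ∑ b, f a b c :=
        Finset.sum_congr rfl fun a _ => Finset.sum_comm
    _ = ∑ c, ∑ a, ∑ b, f a b c := Finset.sum_comm

private lemma sumswap4 {M : Type*} [AddCommMonoid M] {α β γ' δ' : Type*}
    [Fintype α] [Fintype β] [Fintype γ'] [Fintype δ']
    (f : α → β → γ' → δ' → M) :
    ∑ a, ∑ b, ∑ c, ∑ d, f a b c d = ∑ d, ∑ c, ∑ b, ∑ a, f a b c d := by
  calc ∑ a, ∑ b, ∑ c, ∑ d, f a b c d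
      = ∑ a, ∑ d, ∑ c, ∑ b, f a b c d := Finset.sum_congr rfl fun a _ => by
        calc ∑ b, ∑ c, ∑ d, f a b c d = ∑ b, ∑ d, ∑ c, f a b c d :=
              Finset.sum_congr rfl fun b _ => Finset.sum_comm
          _ = ∑ d, ∑ b, ∑ c, f a b c d := Finset.sum_comm
          _ = ∑ d, ∑ c, ∑ b, f a b c d := Finset.sum_congr rfl fun d _ => Finset.sum_comm
    _ = ∑ d, ∑ a, ∑ c, ∑ b, f a b c d := Finset.sum_comm
    _ = ∑ d, ∑ c, ∑ a, ∑ b, f a b c d := Finset.sum_congr rfl fun d _ => Finset.sum_comm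
    _ = ∑ d, ∑ c, ∑ b, ∑ a, f a b c d :=
        Finset.sum_congr rfl fun d _ => Finset.sum_congr rfl fun c _ => Finset.sum_comm

set_option maxHeartbeats 1000000 in
/-- For a regular embedded noncommutative manifold, `∇ = p∘∇⁰`
is a hermitian connection on `(TΣ,h)` satisfying
`∇_{∂_a} e_b = Σ_{c,p} e_c·h^{cp}·(h⁰(e_p,∂_a e_b) + i·γ_{a,pb})`. -/
theorem embedded_manifold_projected_connection
    {A : Type*} [Ring A] [StarRing A] [Algebra ℂ A] [StarModule ℂ A]
    (n m : ℕ) (G : Set (A → A)) (hG : IsLiePair G)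
    (pd : Fin m → (A → A))
    (hmem : ∀ a, pd a ∈ G)
    (hsa : ∀ a, starDeriv (pd a) = pd a)
    (hspan : ∀ δ ∈ G, ∃ c : Fin m → ℂ, δ = ∑ a, c a • pd a)
    (hindep : ∀ c : Fin m → ℂ, (∑ a, c a • pd a) = 0 → ∀ a, c a = 0)
    (X : Fin n → A) (hX : ∀ i, star (X i) = X i)
    (hu : Fin m → Fin m → A)
    (hustar : ∀ a b, star (hu a b) = hu b a)
    (hureg : ∀ c i, (∑ a, ∑ b, eT pd X a i * (hu a b * hform (eT pd X b) (eT pd X c)))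
      = eT pd X c i)
    (γ : Fin m → Fin n → Fin n → A)
    (hγ : ∀ a i j, star (γ a i j) = γ a j i) :
    -- ∇ maps TΣ into TΣ
    (∀ a U, InT pd X U → InT pd X (connNabla pd X hu γ a U)) ∧
    -- ∇ is additive
    (∀ a U V, InT pd X U → InT pd X V →
      connNabla pd X hu γ a (U + V) =
        connNabla pd X hu γ a U + connNabla pd X hu γ a V) ∧
    -- ∇ satisfies the Leibniz rule
    (∀ a U f, InT pd X U →
      connNabla pd X hu γ a (smulR U f) =
        smulR (connNabla pd X hu γ a U) f + smulR U (pd a f)) ∧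
    -- ∇ is hermitian with respect to h = h⁰|_{TΣ}
    (∀ a U V, InT pd X U → InT pd X V →
      pd a (hform U V) =
        hform (connNabla pd X hu γ a U) V + hform U (connNabla pd X hu γ a V)) ∧
    -- the explicit formula for ∇_{∂_a} e_b
    (∀ a b, connNabla pd X hu γ a (eT pd X b) =
      fun i => ∑ c, ∑ p, eT pd X c i *
        (hu c p * (hform (eT pd X p) (fun j => pd a (pd b (X j))) +
          Complex.I • gammaT pd X γ a p b))) := by

  have hadd : ∀ a (x y : A), pd a (x + y) = pd a x + pd a y :=
    fun a => (hG.1 _ (hmem a)).1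
  have hmul : ∀ a (x y : A), pd a (x * y) = pd a x * y + x * pd a y :=
    fun a => (hG.1 _ (hmem a)).2.2
  have hstar : ∀ a (x : A), pd a (star x) = star (pd a x) := by
    intro a x
    have h1 : star (pd a (star x)) = pd a x := congrFun (hsa a) x
    rw [← h1, star_star]
  have hsum : ∀ a (f : Fin n → A), pd a (∑ i, f i) = ∑ i, pd a (f i) :=
    fun a f => map_sum (AddMonoidHom.mk' (pd a) (hadd a)) f Finset.univ
  have star_hform : ∀ (U V : Fin n → A), star (hform U V) = hform V U := by
    intro U V
    simp [hform, star_sum, star_mul, star_star]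
  have hform_sum : ∀ (W : Fin n → A) (cf : Fin m → A),
      hform W (fun i => ∑ c, eT pd X c i * cf c) = ∑ c, hform W (eT pd X c) * cf c := by
    intro W cf
    simp only [hform, Finset.mul_sum, Finset.sum_mul, mul_assoc]
    exact Finset.sum_comm
  have proj_fix : ∀ U, InT pd X U → tProj pd X hu U = U := by
    rintro U ⟨cf, rfl⟩
    funext i
    simp only [tProj, hform_sum]
    have key : ∀ c, eT pd X c i * cf c
        = ∑ a, ∑ b, eT pd X a i * (hu a b * (hform (eT pd X b) (eT pd X c) * cf c)) := by
      intro c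
      rw [← hureg c i]
      simp [Finset.sum_mul, mul_assoc]
    calc ∑ a, ∑ b, eT pd X a i * (hu a b * ∑ c, hform (eT pd X b) (eT pd X c) * cf c)
        = ∑ a, ∑ b, ∑ c, eT pd X a i * (hu a b * (hform (eT pd X b) (eT pd X c) * cf c)) := by
          simp [Finset.mul_sum]
      _ = ∑ c, ∑ a, ∑ b, eT pd X a i * (hu a b * (hform (eT pd X b) (eT pd X c) * cf c)) :=
          sumswap3 _
      _ = ∑ c, eT pd X c i * cf c := Finset.sum_congr rfl fun c _ => (key c).symm
  have proj_mem : ∀ U, InT pd X (tProj pd X hu U) := by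
    intro U
    refine ⟨fun a => ∑ b, hu a b * hform (eT pd X b) U, ?_⟩
    funext i
    simp [tProj, Finset.mul_sum]
  have hform_add : ∀ (W U V : Fin n → A), hform W (U + V) = hform W U + hform W V := by
    intro W U V
    simp only [hform, Pi.add_apply, mul_add, Finset.sum_add_distrib]
  have hform_smulR : ∀ (W U : Fin n → A) (f : A), hform W (smulR U f) = hform W U * f := by
    intro W U f
    simp only [hform, smulR, Finset.sum_mul, mul_assoc]
  have tProj_add : ∀ (U V : Fin n → A),
      tProj pd X hu (U + V) = tProj pd X hu U + tProj pd X hu V := by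
    intro U V
    funext i
    simp only [tProj, hform_add, mul_add, Finset.sum_add_distrib, Pi.add_apply]
  have tProj_smulR : ∀ (U : Fin n → A) (f : A),
      tProj pd X hu (smulR U f) = smulR (tProj pd X hu U) f := by
    intro U f
    funext i
    simp only [tProj, smulR, hform_smulR, Finset.sum_mul, mul_assoc]
  have conn0_add : ∀ a (U V : Fin n → A),
      conn0 pd γ a (U + V) = conn0 pd γ a U + conn0 pd γ a V := by
    intro a U V
    funext i
    simp only [conn0, Pi.add_apply, hadd, mul_add, smul_add, Finset.sum_add_distrib]
    abel
  have conn0_smulR : ∀ a (U : Fin n → A) (f : A),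
      conn0 pd γ a (smulR U f) = smulR (conn0 pd γ a U) f + smulR U (pd a f) := by
    intro a U f
    funext i
    simp only [conn0, smulR, Pi.add_apply, hmul, Finset.sum_mul, add_mul,
      smul_mul_assoc, mul_assoc]
    abel
  have tProj_adj : ∀ (W Z : Fin n → A),
      hform (tProj pd X hu W) Z = hform W (tProj pd X hu Z) := by
    intro W Z
    have L : hform (tProj pd X hu W) Z
        = ∑ i, ∑ a, ∑ b, ∑ k,
            star (W k) * (eT pd X b k * (hu b a * (star (eT pd X a i) * Z i))) := by
      simp only [hform, tProj, star_sum, star_mul, star_star, hustar, Finset.sum_mul,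
        Finset.mul_sum, mul_assoc]
    have R : hform W (tProj pd X hu Z)
        = ∑ i, ∑ a, ∑ b, ∑ k,
            star (W i) * (eT pd X a i * (hu a b * (star (eT pd X b k) * Z k))) := by
      simp only [hform, tProj, Finset.mul_sum, mul_assoc]
    rw [L, R, sumswap4]
  have conn0_herm : ∀ a (U V : Fin n → A),
      pd a (hform U V) = hform (conn0 pd γ a U) V + hform U (conn0 pd γ a V) := by
    intro a U V
    have cancel : (∑ i, ∑ j, star (Complex.I • (γ a i j * U j)) * V i)
        = - ∑ i, ∑ j, star (U i) * (Complex.I • (γ a i j * V j)) := by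
      have e1 : ∀ (i j : Fin n), star (Complex.I • (γ a i j * U j)) * V i
          = -(star (U j) * (Complex.I • (γ a j i * V i))) := by
        intro i j
        rw [star_smul, star_mul, hγ]
        simp [Complex.star_def, Complex.conj_I, neg_smul, smul_mul_assoc,
          mul_smul_comm, mul_assoc]
      simp only [e1, Finset.sum_neg_distrib]
      exact neg_inj.mpr Finset.sum_comm
    calc pd a (hform U V)
        = ∑ i, (star (pd a (U i)) * V i + star (U i) * pd a (V i)) := by
          simp only [hform, hsum, hmul, hstar]
      _ = (∑ i, star (pd a (U i)) * V i) + ∑ i, star (U i) * pd a (V i) :=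
          Finset.sum_add_distrib
      _ = hform (conn0 pd γ a U) V + hform U (conn0 pd γ a V) := by
          simp only [hform, conn0, star_add, star_sum, add_mul, mul_add,
            Finset.sum_add_distrib, Finset.sum_mul, Finset.mul_sum]
          rw [cancel]
          abel
  refine ⟨fun a U _ => proj_mem _, ?_, ?_, ?_, ?_⟩
  · intro a U V _ _
    show tProj pd X hu _ = _
    rw [conn0_add, tProj_add]
    rfl
  · intro a U f hU
    show tProj pd X hu _ = _
    rw [conn0_smulR, tProj_add, tProj_smulR, tProj_smulR, proj_fix U hU]
    rfl
  · intro a U V hU hV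
    rw [conn0_herm a U V]
    show _ = hform (tProj pd X hu (conn0 pd γ a U)) V + hform U (tProj pd X hu (conn0 pd γ a V))
    rw [tProj_adj, proj_fix V hV]
    congr 1
    rw [← tProj_adj, proj_fix U hU]
  · intro a b
    show tProj pd X hu (conn0 pd γ a (eT pd X b)) = _
    funext i
    have key : ∀ p, hform (eT pd X p) (conn0 pd γ a (eT pd X b))
        = hform (eT pd X p) (fun j => pd a (pd b (X j))) + Complex.I • gammaT pd X γ a p b := by
      intro p
      simp only [hform, conn0, gammaT, eT, mul_add, Finset.mul_sum, mul_smul_comm,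
        Finset.smul_sum, Finset.sum_add_distrib]
    simp only [tProj, key]
end
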